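/- The parity expectation is invariant under cyclic shifts of the word: for every n ≥ 3, every surjective word w : Fin n → Fin 3, and every k, P(w ∘ r_k) = P(w), where r_k : Fin n → Fin n is the cyclic shift i ↦ i + k (addition mod n). Hence P is an invariant of the oriented necklace (cyclic word) with beads colored by three colors. -/

import Mathlib

/-- The set of proper subwords of a word `w : Fin n → Fin 3`: sections
`s : Fin 3 → Fin n` with `w (s i) = i` for all `i`. -/
def properSubwords {n : ℕ} (w : Fin n → Fin 3) : Finset (Fin 3 → Fin n) :=
  Finset.univ.filter (fun s => ∀ i, w (s i) = i)

/-- The parity of a proper subword `s`: the sign of the unique permutation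
`σ` of `Fin 3` such that `j ↦ s (σ j)` is (strictly) monotone; for injective
`s` this is the sorting permutation `Tuple.sort s`. -/
def subwordParity {n : ℕ} (s : Fin 3 → Fin n) : ℤ :=
  Equiv.Perm.sign (Tuple.sort s)

/-- The parity expectation `P(w)`: the sum of the parities of all proper
subwords of `w`, divided by the number of proper subwords of `w`. -/
def parityExpectation {n : ℕ} (w : Fin n → Fin 3) : ℚ :=
  (∑ s ∈ properSubwords w, (subwordParity s : ℚ)) / ((properSubwords w).card : ℚ)

/-! The parity of a proper subword `s` is `(-1)` to the number of inversions of `s`. Adding `k`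
to positions preserves the relative order of two positions unless exactly one of them wraps
around `n`, so each comparison sign is multiplied by `ω a * ω b`, where `ω = -1` exactly on the
positions that wrap. Each position of `s` lies in two of the three pairs (an even number, as for
any odd word length), so these factors cancel. Finally `s ↦ s + k` is a bijection from the proper
subwords of the shifted word onto those of `w`. -/

open Finset Function Equiv

section InversionSign

variable {α : Type*} [LinearOrder α] {m : ℕ}

def ltSign (a b : α) : ℤˣ := if a < b then 1 else -1

def inversionSign (t : Fin m → α) : ℤˣ :=
  ∏ i, ∏ j ∈ Ioi i, ltSign (t i) (t j)

lemma inversionSign_comp_strictMono {β : Type*} [LinearOrder β] {g : α → β} (hg : StrictMono g)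
    (t : Fin m → α) : inversionSign (g ∘ t) = inversionSign t := by
  simp only [inversionSign, ltSign, Function.comp_apply, hg.lt_iff_lt]

lemma Equiv.Perm.sign_eq_inversionSign (σ : Perm (Fin m)) : Perm.sign σ = inversionSign σ :=
  σ.sign_eq_prod_prod_Ioi

lemma sign_sort_eq_inversionSign {s : Fin m → α} (hs : Injective s) :
    Perm.sign (Tuple.sort s) = inversionSign s := by
  set σ := Tuple.sort s
  have hmono : StrictMono (s ∘ σ) :=
    (Tuple.monotone_sort s).strictMono_of_injective (hs.comp σ.injective)
  calc Perm.sign σ = Perm.sign σ⁻¹ := (Perm.sign_inv σ).symm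
    _ = inversionSign ((s ∘ σ) ∘ ⇑σ⁻¹) := by
      rw [σ⁻¹.sign_eq_inversionSign, inversionSign_comp_strictMono hmono]
    _ = inversionSign s := by simp [Function.comp_def]

end InversionSign

def wrapSign {n : ℕ} (k a : Fin n) : ℤˣ := if n ≤ a.val + k.val then -1 else 1

lemma ltSign_add_right {n : ℕ} (k : Fin n) {a b : Fin n} (hab : a ≠ b) :
    ltSign (a + k) (b + k) = wrapSign k a * wrapSign k b * ltSign a b := by
  have := Fin.val_ne_of_ne hab
  have := a.isLt; have := b.isLt; have := k.isLt
  simp only [ltSign, wrapSign, Fin.lt_def, Fin.val_add_eq_ite]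
  split_ifs <;> first | omega | decide

lemma prod_prod_Ioi_mul {m : ℕ} {M : Type*} [CommMonoid M] (u : Fin m → M) :
    ∏ i, ∏ j ∈ Ioi i, u i * u j = ∏ i, u i ^ (m - 1) := by
  simp only [prod_mul_distrib, prod_const, Fin.card_Ioi]
  rw [prod_comm' (t' := univ) (s' := fun j => Iio j) (by simp)]
  simp only [prod_const, Fin.card_Iio, ← prod_mul_distrib, ← pow_add]
  exact prod_congr rfl fun i _ => by congr 1; omega

lemma inversionSign_add_right {m n : ℕ} (hm : Odd m) {s : Fin m → Fin n} (hs : Injective s)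
    (k : Fin n) : inversionSign (fun i => s i + k) = inversionSign s := by
  have hflip : inversionSign (fun i => s i + k) =
      (∏ i, ∏ j ∈ Ioi i, wrapSign k (s i) * wrapSign k (s j)) * inversionSign s := by
    simp only [inversionSign, ← prod_mul_distrib]
    exact prod_congr rfl fun i _ => prod_congr rfl fun j hj =>
      ltSign_add_right k (hs.ne (mem_Ioi.1 hj).ne)
  obtain ⟨r, hr⟩ := hm
  simp [hflip, prod_prod_Ioi_mul, hr, pow_mul, Int.units_sq]

section Subwords

variable {n : ℕ}

lemma injective_of_mem_properSubwords {w : Fin n → Fin 3} {s : Fin 3 → Fin n}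
    (hs : s ∈ properSubwords w) : Injective s :=
  LeftInverse.injective (g := w) (mem_filter.1 hs).2

lemma subwordParity_eq_inversionSign {s : Fin 3 → Fin n} (hs : Injective s) :
    subwordParity s = inversionSign s :=
  congrArg Units.val (sign_sort_eq_inversionSign hs)

lemma parityExpectation_comp_perm (w : Fin n → Fin 3) (e : Perm (Fin n))
    (he : ∀ s : Fin 3 → Fin n, Injective s → subwordParity (e ∘ s) = subwordParity s) :
    parityExpectation (w ∘ e) = parityExpectation w := by
  let E : (Fin 3 → Fin n) ≃ (Fin 3 → Fin n) := Equiv.piCongrRight fun _ => e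
  have hmem : ∀ s, s ∈ properSubwords (w ∘ e) ↔ E s ∈ properSubwords w := by
    simp [properSubwords, E]
  rw [parityExpectation, parityExpectation, card_equiv E hmem]
  congr 1
  exact sum_equiv E hmem fun s hs => by
    rw [← he s (injective_of_mem_properSubwords hs)]
    rfl

end Subwords

theorem parityExpectation_cyclic_shift_general (n : ℕ)
    (w : Fin n → Fin 3) (k : Fin n) :
    parityExpectation (fun i => w (i + k)) = parityExpectation w := by
  have : NeZero n := NeZero.of_pos k.pos
  refine parityExpectation_comp_perm w (Equiv.addRight k) fun s hs => ?_
  have hs' : Injective (Equiv.addRight k ∘ s) := (Equiv.injective _).comp hs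
  rw [subwordParity_eq_inversionSign hs, subwordParity_eq_inversionSign hs']
  exact congrArg _ (inversionSign_add_right (by decide) hs k)

/-- The parity expectation is invariant under cyclic shifts of the word. -/
theorem parityExpectation_cyclic_shift (n : ℕ) (hn : 3 ≤ n)
    (w : Fin n → Fin 3) (hw : Function.Surjective w) (k : Fin n) :
    parityExpectation (fun i => w (i + k)) = parityExpectation w :=
  parityExpectation_cyclic_shift_general n w k
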